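/- Let X = {0^∞} be the one-point full shift. Every pointed Galois factor (Y, y₀, ϖ) over X of degree d consists of a single periodic orbit of length d, its automorphism group equals ⟨σ_Y⟩ ≅ ℤ/dℤ, and a degree-n factor dominates a degree-m factor (admits a pointed unramified factor map over X) if and only if m ∣ n. Consequently the absolute Galois group of the one-point full shift is the profinite completion of ℤ: G_{Σ₁} ≅ Ẑ = lim← ℤ/nℤ. -/

import Mathlib

open Function Set

/-- The shift map on bi-infinite sequences. -/
def shiftMap (A : Type*) : (ℤ → A) → (ℤ → A) := fun x i => x (i + 1)

/-- A (two-sided) subshift over an alphabet `A`: a closed, shift-invariant subset of the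
full shift `A^ℤ` on which the shift is onto. -/
structure Subshift (A : Type*) [TopologicalSpace A] where
  carrier : Set (ℤ → A)
  isClosed' : IsClosed carrier
  shift_mem' : ∀ x ∈ carrier, shiftMap A x ∈ carrier
  shift_surjOn' : ∀ x ∈ carrier, ∃ y ∈ carrier, shiftMap A y = x

/-- The shift map restricted to a subshift. -/
def Subshift.σ {A : Type*} [TopologicalSpace A] (X : Subshift A) : X.carrier → X.carrier :=
  fun x => ⟨shiftMap A x.1, X.shift_mem' x.1 x.2⟩

/-- `X` is a shift of finite type: membership is determined by a finite-window rule. -/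
def Subshift.IsSFT {A : Type*} [TopologicalSpace A] (X : Subshift A) : Prop :=
  ∃ (n : ℕ) (W : Set (Fin n → A)),
    X.carrier = {x | ∀ i : ℤ, (fun k : Fin n => x (i + (k.val : ℤ))) ∈ W}

/-- Irreducibility (= topological transitivity) of a subshift. -/
def Subshift.Irreducible {A : Type*} [TopologicalSpace A] (X : Subshift A) : Prop :=
  ∀ U V : Set X.carrier, IsOpen U → IsOpen V → U.Nonempty → V.Nonempty →
    ∃ n : ℕ, (X.σ^[n] '' U ∩ V).Nonempty

/-- A factor map between subshifts: a continuous, shift-commuting surjection. -/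
structure IsFactorMap {A B : Type*} [TopologicalSpace A] [TopologicalSpace B]
    (Y : Subshift B) (X : Subshift A) (ϖ : Y.carrier → X.carrier) : Prop where
  continuous : Continuous ϖ
  commutes : ∀ y, ϖ (Y.σ y) = X.σ (ϖ y)
  surjective : Function.Surjective ϖ

/-- An unramified (constant-to-one) factor map of degree `d`. -/
def IsUnramified {A B : Type*} [TopologicalSpace A] [TopologicalSpace B]
    (Y : Subshift B) (X : Subshift A) (ϖ : Y.carrier → X.carrier) (d : ℕ) : Prop :=
  IsFactorMap Y X ϖ ∧ ∀ x : X.carrier, (ϖ ⁻¹' {x}).Finite ∧ (ϖ ⁻¹' {x}).ncard = d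

/-- The relative automorphism group `Aut(Y/X, ϖ)`: shift-commuting self-homeomorphisms of `Y`
over `X`. -/
def relAut {A B : Type*} [TopologicalSpace A] [TopologicalSpace B]
    (Y : Subshift B) (X : Subshift A) (ϖ : Y.carrier → X.carrier) :
    Subgroup (Equiv.Perm Y.carrier) where
  carrier := {φ | Continuous φ ∧ Continuous (φ⁻¹ : Equiv.Perm Y.carrier) ∧
    (∀ y, φ (Y.σ y) = Y.σ (φ y)) ∧ ∀ y, ϖ (φ y) = ϖ y}
  one_mem' := ⟨by simpa using continuous_id, by simpa using continuous_id,
    fun _ => by simp, fun _ => by simp⟩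
  mul_mem' := by
    rintro φ ψ ⟨hc, hci, hcomm, hrel⟩ ⟨hc', hci', hcomm', hrel'⟩
    refine ⟨?_, ?_, fun y => ?_, fun y => ?_⟩
    · simpa [Equiv.Perm.coe_mul] using hc.comp hc'
    · simpa [mul_inv_rev, Equiv.Perm.coe_mul] using hci'.comp hci
    · simp [Equiv.Perm.mul_apply, hcomm, hcomm']
    · simp [Equiv.Perm.mul_apply, hrel, hrel']
  inv_mem' := by
    rintro φ ⟨hc, hci, hcomm, hrel⟩
    refine ⟨hci, by simpa using hc, fun y => φ.injective ?_, fun y => ?_⟩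
    · simp [hcomm, Equiv.Perm.inv_def, Equiv.apply_symm_apply]
    · conv_rhs => rw [← Equiv.apply_symm_apply φ y]
      exact (hrel _).symm

/-- A pointed Galois factor of degree `d` over a pointed subshift `(X, x₀)`. -/
def IsPointedGaloisFactor {A B : Type*} [TopologicalSpace A] [TopologicalSpace B]
    (Y : Subshift B) (y₀ : Y.carrier) (X : Subshift A) (x₀ : X.carrier)
    (ϖ : Y.carrier → X.carrier) (d : ℕ) : Prop :=
  Y.IsSFT ∧ Y.Irreducible ∧ ϖ y₀ = x₀ ∧ IsUnramified Y X ϖ d ∧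
    Nat.card (relAut Y X ϖ) = d

/-- The full shift on an alphabet `A`. -/
def fullShift (A : Type*) [TopologicalSpace A] : Subshift A where
  carrier := Set.univ
  isClosed' := isClosed_univ
  shift_mem' := fun _ _ => Set.mem_univ _
  shift_surjOn' := fun x _ => ⟨fun i => x (i - 1), Set.mem_univ _, by
    funext i; simp [shiftMap]⟩

section Stmt13Aux

open Function Set

theorem Stmt13.x0_unique : ∀ a b : (fullShift PUnit).carrier, a = b := fun a b =>
  Subtype.ext (funext fun _ => rfl)

variable {B : Type*} [TopologicalSpace B] [DiscreteTopology B] [Finite B]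

omit [DiscreteTopology B] [Finite B] in
theorem Stmt13.sigma_inj (Y : Subshift B) : Function.Injective Y.σ := by
  intro a b hab
  apply Subtype.ext
  funext i
  have h := congrFun (congrArg Subtype.val hab) (i - 1)
  simpa [Subshift.σ, shiftMap] using h

theorem Stmt13.orbit_core (Y : Subshift B) (y₀ : Y.carrier) [Finite Y.carrier]
    (hIrr : Y.Irreducible) :
    ∃ p : ℕ, 0 < p ∧ (∀ m : ℕ, Y.σ^[m] y₀ = Y.σ^[m % p] y₀) ∧
      Function.Bijective (fun k : Fin p => Y.σ^[k.val] y₀) := by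
  haveI : DiscreteTopology Y.carrier := inferInstance
  have htrans : ∀ y y' : Y.carrier, ∃ n, Y.σ^[n] y = y' := by
    intro y y'
    obtain ⟨n, z, ⟨w, hw, hwz⟩, hz⟩ :=
      hIrr {y} {y'} (isOpen_discrete _) (isOpen_discrete _) ⟨y, rfl⟩ ⟨y', rfl⟩
    rw [Set.mem_singleton_iff] at hw hz
    exact ⟨n, hw ▸ hz ▸ hwz⟩
  classical
  obtain ⟨n, hn⟩ := htrans (Y.σ y₀) y₀
  have hP : ∃ m, 0 < m ∧ Y.σ^[m] y₀ = y₀ :=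
    ⟨n + 1, Nat.succ_pos _, by rwa [Function.iterate_succ_apply]⟩
  set p := Nat.find hP with hpdef
  obtain ⟨hppos, hper⟩ := Nat.find_spec hP
  have hq : ∀ q r : ℕ, Y.σ^[p * q + r] y₀ = Y.σ^[r] y₀ := by
    intro q r
    induction q with
    | zero => simp
    | succ q ih =>
        have : p * (q + 1) + r = (p * q + r) + p := by ring
        rw [this, Function.iterate_add_apply, hper, ih]
  have hmod : ∀ m : ℕ, Y.σ^[m] y₀ = Y.σ^[m % p] y₀ := by
    intro m
    conv_lhs => rw [← Nat.div_add_mod m p]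
    exact hq (m / p) (m % p)
  refine ⟨p, hppos, hmod, ?_, ?_⟩
  · have key : ∀ k j : Fin p, (k : ℕ) ≤ (j : ℕ) →
        Y.σ^[(k : ℕ)] y₀ = Y.σ^[(j : ℕ)] y₀ → k = j := by
      intro k j hle hkj
      have hdec : (j : ℕ) = (k : ℕ) + ((j : ℕ) - (k : ℕ)) := by omega
      rw [hdec, Function.iterate_add_apply] at hkj
      have h2 : Y.σ^[(j : ℕ) - (k : ℕ)] y₀ = y₀ :=
        ((Stmt13.sigma_inj Y).iterate (k : ℕ)) hkj.symm
      have hlt : (j : ℕ) - (k : ℕ) < p := lt_of_le_of_lt (Nat.sub_le _ _) j.2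
      have hmin := Nat.find_min hP hlt
      push_neg at hmin
      have h0 : (j : ℕ) - (k : ℕ) = 0 := by
        by_contra hne
        exact absurd h2 (by simpa using hmin (Nat.pos_of_ne_zero hne))
      exact Fin.ext (by omega)
    intro k j hkj
    simp only at hkj
    rcases le_total (k : ℕ) (j : ℕ) with hle | hle
    · exact key k j hle hkj
    · exact (key j k hle hkj.symm).symm
  · intro y
    obtain ⟨m, hm⟩ := htrans y₀ y
    exact ⟨⟨m % p, Nat.mod_lt _ hppos⟩, by rw [← hm, hmod m]⟩

/-- Structure theorem: a pointed Galois factor of the one-point shift is a single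
periodic orbit of length `d`, coordinatized by `ZMod d`. -/
theorem Stmt13.structure_thm (Y : Subshift B) (y₀ : Y.carrier)
    (ϖ : Y.carrier → (fullShift PUnit).carrier) (d : ℕ)
    (h : IsPointedGaloisFactor Y y₀ (fullShift PUnit)
        ⟨fun _ => PUnit.unit, Set.mem_univ _⟩ ϖ d) :
    d ≠ 0 ∧ Finite Y.carrier ∧
      ∃ e : ZMod d ≃ Y.carrier, e 0 = y₀ ∧ ∀ n : ℕ, Y.σ^[n] y₀ = e (n : ZMod d) := by
  obtain ⟨-, hIrr, -, ⟨hFac, hFib⟩, -⟩ := h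
  have hpre : ϖ ⁻¹' {⟨fun _ => PUnit.unit, Set.mem_univ _⟩} = Set.univ :=
    Set.eq_univ_of_forall fun y => Stmt13.x0_unique _ _
  obtain ⟨hfin, hcard⟩ := hFib ⟨fun _ => PUnit.unit, Set.mem_univ _⟩
  rw [hpre] at hfin hcard
  rw [Set.ncard_univ] at hcard
  haveI hYfin : Finite Y.carrier := Set.finite_univ_iff.mp hfin
  haveI : Nonempty Y.carrier := ⟨y₀⟩
  have hdpos : 0 < d := hcard ▸ Nat.card_pos
  obtain ⟨p, hppos, hmod, hbij⟩ := Stmt13.orbit_core Y y₀ hIrr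
  have hpd : p = d := by
    have := Nat.card_congr (Equiv.ofBijective _ hbij)
    rw [Nat.card_eq_fintype_card] at this
    simp only [Fintype.card_fin] at this
    rw [this, hcard]
  subst hpd
  haveI : NeZero p := ⟨by omega⟩
  have hf : Function.Bijective (fun k : ZMod p => Y.σ^[k.val] y₀) := by
    constructor
    · intro k j hkj
      have := hbij.1 (a₁ := ⟨k.val, ZMod.val_lt k⟩) (a₂ := ⟨j.val, ZMod.val_lt j⟩)
        (by simpa using hkj)
      exact ZMod.val_injective p (by simpa [Fin.ext_iff] using this)
    · intro y
      obtain ⟨k, hk⟩ := hbij.2 y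
      refine ⟨((k : ℕ) : ZMod p), ?_⟩
      simp only [ZMod.val_natCast]
      rw [← hmod (k : ℕ)]
      exact hk
  refine ⟨by omega, hYfin, Equiv.ofBijective _ hf, ?_, ?_⟩
  · show Y.σ^[(0 : ZMod p).val] y₀ = y₀
    rw [ZMod.val_zero]
    rfl
  · intro n
    show Y.σ^[n] y₀ = Y.σ^[((n : ZMod p)).val] y₀
    rw [ZMod.val_natCast]
    exact hmod n

section Coord

variable {Y : Subshift B} {y₀ : Y.carrier} {d : ℕ} [NeZero d] {e : ZMod d ≃ Y.carrier}

omit [DiscreteTopology B] [Finite B] in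
theorem Stmt13.e_iter (hiter : ∀ n : ℕ, Y.σ^[n] y₀ = e (n : ZMod d)) (n : ℕ) (k : ZMod d) :
    Y.σ^[n] (e k) = e (k + (n : ZMod d)) := by
  have h1 : e k = Y.σ^[k.val] y₀ := by
    rw [hiter k.val, ZMod.natCast_val, ZMod.cast_id]
  rw [h1, ← Function.iterate_add_apply, hiter]
  congr 1
  push_cast
  rw [ZMod.natCast_val, ZMod.cast_id]
  ring

omit [DiscreteTopology B] [Finite B] in
theorem Stmt13.e_sigma (hiter : ∀ n : ℕ, Y.σ^[n] y₀ = e (n : ZMod d)) (k : ZMod d) :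
    Y.σ (e k) = e (k + 1) := by
  have h := Stmt13.e_iter hiter 1 k
  simpa using h

omit [DiscreteTopology B] [Finite B] in
theorem Stmt13.period_iff (he0 : e 0 = y₀) (hiter : ∀ n : ℕ, Y.σ^[n] y₀ = e (n : ZMod d))
    (n : ℕ) : Y.σ^[n] y₀ = y₀ ↔ d ∣ n := by
  rw [hiter n, ← he0, e.apply_eq_iff_eq]
  exact ZMod.natCast_eq_zero_iff n d

omit [DiscreteTopology B] [Finite B] in
theorem Stmt13.relAut_apply (hiter : ∀ n : ℕ, Y.σ^[n] y₀ = e (n : ZMod d))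
    {φ : Equiv.Perm Y.carrier} (hφ : ∀ y, φ (Y.σ y) = Y.σ (φ y)) (k : ZMod d) :
    φ (e k) = e (k + e.symm (φ y₀)) := by
  have hsemi : ∀ (n : ℕ) (y), φ (Y.σ^[n] y) = Y.σ^[n] (φ y) := fun n y =>
    (Function.Semiconj.iterate_right hφ n) y
  have h1 : e k = Y.σ^[k.val] y₀ := by
    rw [hiter k.val, ZMod.natCast_val, ZMod.cast_id]
  rw [h1, hsemi]
  conv_lhs => rw [← e.apply_symm_apply (φ y₀)]
  rw [Stmt13.e_iter hiter]
  congr 1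
  rw [ZMod.natCast_val, ZMod.cast_id]
  ring

theorem Stmt13.mem_relAut [Finite Y.carrier] (ϖ : Y.carrier → (fullShift PUnit).carrier)
    (φ : Equiv.Perm Y.carrier) (hcomm : ∀ y, φ (Y.σ y) = Y.σ (φ y)) :
    φ ∈ relAut Y (fullShift PUnit) ϖ :=
  ⟨continuous_of_discreteTopology, continuous_of_discreteTopology, hcomm,
   fun _ => Stmt13.x0_unique _ _⟩

end Coord

/-- Cardinality of fibers of `ZMod.castHom`. -/
theorem Stmt13.castHom_fiber_card (d₂ d₁ : ℕ) [NeZero d₁] [NeZero d₂] (h : d₂ ∣ d₁)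
    (b : ZMod d₂) :
    Nat.card {k : ZMod d₁ // ZMod.castHom h (ZMod d₂) k = b} = d₁ / d₂ := by
  have hd₂pos : 0 < d₂ := Nat.pos_of_ne_zero (NeZero.ne d₂)
  have hmul : d₂ * (d₁ / d₂) = d₁ := Nat.mul_div_cancel' h
  have hqpos : 0 < d₁ / d₂ := by
    rcases Nat.eq_zero_or_pos (d₁ / d₂) with h0 | h0
    · rw [h0, Nat.mul_zero] at hmul
      exact absurd hmul.symm (NeZero.ne d₁)
    · exact h0
  haveI : NeZero (d₁ / d₂) := ⟨by omega⟩
  have hcast : ∀ k : ZMod d₁, ZMod.castHom h (ZMod d₂) k = ((k.val : ℕ) : ZMod d₂) := by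
    intro k
    rw [ZMod.castHom_apply, ← ZMod.natCast_val]
  have hbound : ∀ i : ZMod (d₁ / d₂), b.val + d₂ * i.val < d₁ := by
    intro i
    calc b.val + d₂ * i.val < d₂ + d₂ * i.val := by
          exact Nat.add_lt_add_right (ZMod.val_lt b) _
      _ = d₂ * (i.val + 1) := by ring
      _ ≤ d₂ * (d₁ / d₂) := Nat.mul_le_mul_left _ (ZMod.val_lt i)
      _ = d₁ := hmul
  have gmem : ∀ i : ZMod (d₁ / d₂),
      ZMod.castHom h (ZMod d₂) (((b.val + d₂ * i.val : ℕ) : ZMod d₁)) = b := by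
    intro i
    rw [map_natCast]
    push_cast
    simp [ZMod.natCast_self, ZMod.natCast_val, ZMod.cast_id]
  set g : ZMod (d₁ / d₂) → {k : ZMod d₁ // ZMod.castHom h (ZMod d₂) k = b} :=
    fun i => ⟨((b.val + d₂ * i.val : ℕ) : ZMod d₁), gmem i⟩ with hgdef
  have hg : Function.Bijective g := by
    constructor
    · intro i j hij
      have h1 : ((b.val + d₂ * i.val : ℕ) : ZMod d₁) = ((b.val + d₂ * j.val : ℕ) : ZMod d₁) :=
        congrArg Subtype.val hij
      have h2 := congrArg ZMod.val h1
      rw [ZMod.val_cast_of_lt (hbound i), ZMod.val_cast_of_lt (hbound j)] at h2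
      have : i.val = j.val := by
        have := Nat.eq_of_mul_eq_mul_left hd₂pos (by omega : d₂ * i.val = d₂ * j.val)
        exact this
      exact ZMod.val_injective _ this
    · rintro ⟨k, hk⟩
      have hbv : b.val = k.val % d₂ := by
        rw [← hk, hcast k, ZMod.val_natCast]
      refine ⟨((k.val / d₂ : ℕ) : ZMod (d₁ / d₂)), ?_⟩
      apply Subtype.ext
      show ((b.val + d₂ * (((k.val / d₂ : ℕ) : ZMod (d₁ / d₂))).val : ℕ) : ZMod d₁) = k
      rw [ZMod.val_natCast]
      have hlt : k.val / d₂ < d₁ / d₂ := Nat.div_lt_div_of_lt_of_dvd h (ZMod.val_lt k)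
      rw [Nat.mod_eq_of_lt hlt, hbv, Nat.mod_add_div]
      rw [ZMod.natCast_val, ZMod.cast_id]
  rw [Nat.card_congr (Equiv.ofBijective g hg).symm, Nat.card_zmod]

end Stmt13Aux

/-- The absolute Galois group of the one-point full shift `Σ₁` is the profinite integers
`Ẑ`. Concretely: (a) every pointed Galois factor `(Y, y₀, ϖ)` over `Σ₁` of degree `d`
consists of a single periodic orbit of length `d` whose relative automorphism group is
`⟨σ_Y⟩ ≅ ℤ/dℤ`; (a') it is unique up to pointed conjugacy; (b) a degree-`d₁` factor
dominates a degree-`d₂` factor iff `d₂ ∣ d₁`; (c) consequently, for any inverse system of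
pointed Galois factors `(Y_d)_{d ∈ ℕ+}` over `Σ₁` with one factor in each degree, the
inverse limit of their Galois groups is isomorphic to `Ẑ = lim← ℤ/nℤ`. -/
theorem stmt_13
    {B₁ B₂ : Type*} [TopologicalSpace B₁] [DiscreteTopology B₁] [Finite B₁]
    [TopologicalSpace B₂] [DiscreteTopology B₂] [Finite B₂]
    (Y₁ : Subshift B₁) (y₁ : Y₁.carrier)
    (ϖ₁ : Y₁.carrier → (fullShift PUnit).carrier) (d₁ : ℕ)
    (Y₂ : Subshift B₂) (y₂ : Y₂.carrier)
    (ϖ₂ : Y₂.carrier → (fullShift PUnit).carrier) (d₂ : ℕ)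
    (β : ℕ+ → Type*) [∀ d, TopologicalSpace (β d)] [∀ d, DiscreteTopology (β d)]
    [∀ d, Finite (β d)]
    (Yf : ∀ d : ℕ+, Subshift (β d)) (yf : ∀ d : ℕ+, (Yf d).carrier)
    (ϖf : ∀ d : ℕ+, (Yf d).carrier → (fullShift PUnit).carrier)
    (αf : ∀ m n : ℕ+, (m : ℕ) ∣ (n : ℕ) → (Yf n).carrier → (Yf m).carrier) :
    let X₁ := fullShift PUnit
    let x₀ : X₁.carrier := ⟨fun _ => PUnit.unit, Set.mem_univ _⟩
    -- (a) structure of a pointed Galois factor over the one-point shift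
    (IsPointedGaloisFactor Y₁ y₁ X₁ x₀ ϖ₁ d₁ →
      Nat.card Y₁.carrier = d₁ ∧
      (∀ y : Y₁.carrier, ∃ k : ℕ, k < d₁ ∧ Y₁.σ^[k] y₁ = y) ∧
      ∀ φ ∈ relAut Y₁ X₁ ϖ₁, ∃ k : ℕ, ∀ y, φ y = Y₁.σ^[k] y) ∧
    -- (a') uniqueness up to pointed conjugacy in each degree
    (IsPointedGaloisFactor Y₁ y₁ X₁ x₀ ϖ₁ d₁ → IsPointedGaloisFactor Y₂ y₂ X₁ x₀ ϖ₂ d₂ →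
      d₁ = d₂ →
      ∃ f : Y₁.carrier ≃ Y₂.carrier, Continuous f ∧ Continuous f.symm ∧
        (∀ y, f (Y₁.σ y) = Y₂.σ (f y)) ∧ f y₁ = y₂ ∧ ∀ y, ϖ₂ (f y) = ϖ₁ y) ∧
    -- (b) domination is divisibility of degrees
    (IsPointedGaloisFactor Y₁ y₁ X₁ x₀ ϖ₁ d₁ → IsPointedGaloisFactor Y₂ y₂ X₁ x₀ ϖ₂ d₂ →
      ((∃ (α : Y₁.carrier → Y₂.carrier) (e : ℕ), IsUnramified Y₁ Y₂ α e ∧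
          α y₁ = y₂ ∧ ∀ y, ϖ₂ (α y) = ϖ₁ y) ↔ d₂ ∣ d₁)) ∧
    -- (c) the absolute Galois group is `Ẑ`
    ((∀ d : ℕ+, IsPointedGaloisFactor (Yf d) (yf d) X₁ x₀ (ϖf d) d) →
      (∀ (m n : ℕ+) (h : (m : ℕ) ∣ (n : ℕ)),
        IsFactorMap (Yf n) (Yf m) (αf m n h) ∧ αf m n h (yf n) = yf m ∧
          ∀ y, ϖf m (αf m n h y) = ϖf n y) →
      ∃ E : {φ : ∀ d : ℕ+, Equiv.Perm (Yf d).carrier //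
              (∀ d, φ d ∈ relAut (Yf d) X₁ (ϖf d)) ∧
              ∀ (m n : ℕ+) (h : (m : ℕ) ∣ (n : ℕ)) (y : (Yf n).carrier),
                αf m n h (φ n y) = φ m (αf m n h y)} ≃
            {c : ∀ d : ℕ+, ZMod (d : ℕ) //
              ∀ (m n : ℕ+) (h : (m : ℕ) ∣ (n : ℕ)),
                ZMod.castHom h (ZMod (m : ℕ)) (c n) = c m},
        ∀ φ ψ χ, (∀ d : ℕ+, χ.1 d = φ.1 d * ψ.1 d) →
          ∀ d : ℕ+, (E χ).1 d = (E φ).1 d + (E ψ).1 d) := by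
  intro X₁ x₀
  refine ⟨?_, ?_, ?_, ?_⟩
  · -- (a)
    intro h
    obtain ⟨hd₁, hfin₁, e₁, he0₁, hiter₁⟩ := Stmt13.structure_thm Y₁ y₁ ϖ₁ d₁ h
    haveI := hfin₁
    haveI : NeZero d₁ := ⟨hd₁⟩
    refine ⟨?_, ?_, ?_⟩
    · rw [Nat.card_congr e₁.symm, Nat.card_zmod]
    · intro y
      refine ⟨(e₁.symm y).val, ZMod.val_lt _, ?_⟩
      rw [hiter₁, ZMod.natCast_val, ZMod.cast_id, e₁.apply_symm_apply]
    · intro φ hφ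
      have hcomm : ∀ y, φ (Y₁.σ y) = Y₁.σ (φ y) := hφ.2.2.1
      refine ⟨(e₁.symm (φ y₁)).val, fun y => ?_⟩
      have h1 : φ y = φ (e₁ (e₁.symm y)) := by rw [e₁.apply_symm_apply]
      have h2 : Y₁.σ^[(e₁.symm (φ y₁)).val] y
          = Y₁.σ^[(e₁.symm (φ y₁)).val] (e₁ (e₁.symm y)) := by
        rw [e₁.apply_symm_apply]
      rw [h1, h2, Stmt13.relAut_apply hiter₁ hcomm, Stmt13.e_iter hiter₁]
      congr 1
      rw [ZMod.natCast_val, ZMod.cast_id]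
  · -- (a')
    intro h₁ h₂ hdd
    subst hdd
    obtain ⟨hd₁, hfin₁, e₁, he0₁, hiter₁⟩ := Stmt13.structure_thm Y₁ y₁ ϖ₁ d₁ h₁
    obtain ⟨-, hfin₂, e₂, he0₂, hiter₂⟩ := Stmt13.structure_thm Y₂ y₂ ϖ₂ d₁ h₂
    haveI := hfin₁; haveI := hfin₂
    haveI : NeZero d₁ := ⟨hd₁⟩
    refine ⟨e₁.symm.trans e₂, continuous_of_discreteTopology,
      continuous_of_discreteTopology, fun y => ?_, ?_, fun y => Stmt13.x0_unique _ _⟩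
    · simp only [Equiv.trans_apply]
      have h1 : Y₁.σ y = e₁ (e₁.symm y + 1) := by
        conv_lhs => rw [← e₁.apply_symm_apply y]
        exact Stmt13.e_sigma hiter₁ _
      rw [h1, Equiv.symm_apply_apply, Stmt13.e_sigma hiter₂]
    · show e₂ (e₁.symm y₁) = y₂
      rw [← he0₁, Equiv.symm_apply_apply, he0₂]
  · -- (b)
    intro h₁ h₂
    obtain ⟨hd₁, hfin₁, e₁, he0₁, hiter₁⟩ := Stmt13.structure_thm Y₁ y₁ ϖ₁ d₁ h₁
    obtain ⟨hd₂, hfin₂, e₂, he0₂, hiter₂⟩ := Stmt13.structure_thm Y₂ y₂ ϖ₂ d₂ h₂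
    haveI := hfin₁; haveI := hfin₂
    haveI : NeZero d₁ := ⟨hd₁⟩; haveI : NeZero d₂ := ⟨hd₂⟩
    constructor
    · rintro ⟨α, ee, ⟨⟨-, hcomm, -⟩, -⟩, hαy, -⟩
      have hsemi : ∀ (n : ℕ) (y), α (Y₁.σ^[n] y) = Y₂.σ^[n] (α y) := fun n y =>
        (Function.Semiconj.iterate_right hcomm n) y
      have hp1 : Y₁.σ^[d₁] y₁ = y₁ := (Stmt13.period_iff he0₁ hiter₁ d₁).2 dvd_rfl
      have hp2 : Y₂.σ^[d₁] y₂ = y₂ := by rw [← hαy, ← hsemi, hp1]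
      exact (Stmt13.period_iff he0₂ hiter₂ d₁).1 hp2
    · intro hdvd
      set α : Y₁.carrier → Y₂.carrier :=
        fun y => e₂ (ZMod.castHom hdvd (ZMod d₂) (e₁.symm y)) with hα
      have hαe : ∀ k : ZMod d₁, α (e₁ k) = e₂ (ZMod.castHom hdvd (ZMod d₂) k) := by
        intro k; rw [hα]; simp
      refine ⟨α, d₁ / d₂, ⟨⟨continuous_of_discreteTopology, fun y => ?_, fun y => ?_⟩,
        fun x => ⟨Set.toFinite _, ?_⟩⟩, ?_, fun y => Stmt13.x0_unique _ _⟩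
      · -- commutes
        have h1 : Y₁.σ y = e₁ (e₁.symm y + 1) := by
          conv_lhs => rw [← e₁.apply_symm_apply y]
          exact Stmt13.e_sigma hiter₁ _
        conv_rhs => rw [← e₁.apply_symm_apply y]
        rw [h1, hαe, hαe, map_add, map_one, Stmt13.e_sigma hiter₂]
      · -- surjective
        refine ⟨e₁ (((e₂.symm y).val : ℕ) : ZMod d₁), ?_⟩
        rw [hαe, map_natCast, ZMod.natCast_val, ZMod.cast_id, e₂.apply_symm_apply]
      · -- fiber cardinality
        have hequiv : {k : ZMod d₁ // ZMod.castHom hdvd (ZMod d₂) k = e₂.symm x}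
            ≃ ↥(α ⁻¹' {x}) := by
          refine e₁.subtypeEquiv fun k => ?_
          rw [Set.mem_preimage, Set.mem_singleton_iff, hαe,
            Equiv.apply_eq_iff_eq_symm_apply]
        rw [← Nat.card_coe_set_eq, Nat.card_congr hequiv.symm,
          Stmt13.castHom_fiber_card d₂ d₁ hdvd]
      · -- α y₁ = y₂
        rw [← he0₁, hαe, map_zero, he0₂]
  · -- (c)
    intro hGal hMaps
    have hfin : ∀ d : ℕ+, Finite (Yf d).carrier := fun d =>
      (Stmt13.structure_thm _ _ _ _ (hGal d)).2.1
    have hex : ∀ d : ℕ+, ∃ e : ZMod (d:ℕ) ≃ (Yf d).carrier,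
        e 0 = yf d ∧ ∀ n : ℕ, (Yf d).σ^[n] (yf d) = e (n : ZMod (d:ℕ)) := fun d =>
      (Stmt13.structure_thm _ _ _ _ (hGal d)).2.2
    choose e he using hex
    have hαe : ∀ (m n : ℕ+) (h : (m:ℕ) ∣ (n:ℕ)) (k : ZMod (n:ℕ)),
        αf m n h (e n k) = e m (ZMod.castHom h (ZMod (m:ℕ)) k) := by
      intro m n h k
      obtain ⟨⟨-, hcomm, -⟩, hy, -⟩ := hMaps m n h
      have hsemi : ∀ (j : ℕ) (y), αf m n h ((Yf n).σ^[j] y) = (Yf m).σ^[j] (αf m n h y) :=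
        fun j y => (Function.Semiconj.iterate_right hcomm j) y
      have h1 : e n k = (Yf n).σ^[k.val] (yf n) := by
        rw [(he n).2 k.val, ZMod.natCast_val, ZMod.cast_id]
      rw [h1, hsemi, hy, (he m).2 k.val]
      congr 1
      rw [ZMod.castHom_apply, ZMod.natCast_val]
    -- the standard permutation attached to `c : ZMod d`
    have hperm : ∀ (d : ℕ+) (c : ZMod (d:ℕ)) (y : (Yf d).carrier),
        ((((e d).symm.trans (Equiv.addRight c)).trans (e d)) : Equiv.Perm (Yf d).carrier) y
          = e d ((e d).symm y + c) := fun _ _ _ => rfl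
    have hpcomm : ∀ (d : ℕ+) (c : ZMod (d:ℕ)) (y : (Yf d).carrier),
        ((((e d).symm.trans (Equiv.addRight c)).trans (e d)) : Equiv.Perm (Yf d).carrier)
            ((Yf d).σ y)
          = (Yf d).σ (((((e d).symm.trans (Equiv.addRight c)).trans (e d)) :
              Equiv.Perm (Yf d).carrier) y) := by
      intro d c y
      have h1 : (Yf d).σ y = e d ((e d).symm y + 1) := by
        conv_lhs => rw [← (e d).apply_symm_apply y]
        exact Stmt13.e_sigma (he d).2 _
      rw [h1, hperm, hperm, Equiv.symm_apply_apply, Stmt13.e_sigma (he d).2]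
      congr 1
      ring
    refine ⟨⟨fun φ => ⟨fun d => (e d).symm (φ.1 d (yf d)), ?_⟩,
      fun c => ⟨fun d => (((e d).symm.trans (Equiv.addRight (c.1 d))).trans (e d)), ?_, ?_⟩,
      ?_, ?_⟩, ?_⟩
    · -- toFun compatibility
      intro m n h
      show ZMod.castHom h (ZMod (m:ℕ)) ((e n).symm (φ.1 n (yf n)))
        = (e m).symm (φ.1 m (yf m))
      obtain ⟨-, hy, -⟩ := hMaps m n h
      have h1 : φ.1 m (yf m) = αf m n h (φ.1 n (yf n)) := by
        rw [← hy]
        exact (φ.2.2 m n h (yf n)).symm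
      have h2 : αf m n h (φ.1 n (yf n))
          = e m (ZMod.castHom h (ZMod (m:ℕ)) ((e n).symm (φ.1 n (yf n)))) := by
        conv_lhs => rw [← (e n).apply_symm_apply (φ.1 n (yf n))]
        exact hαe m n h _
      rw [h1, h2, Equiv.symm_apply_apply]
    · -- invFun: membership in relAut
      intro d
      haveI := hfin d
      exact Stmt13.mem_relAut (ϖf d) _ (hpcomm d (c.1 d))
    · -- invFun: compatibility with the bonding maps
      intro m n h y
      have hy2 : y = e n ((e n).symm y) := ((e n).apply_symm_apply _).symm
      rw [hperm, hperm]
      conv_lhs => rw [hy2, hαe]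
      rw [map_add, c.2 m n h]
      congr 2
      conv_rhs => rw [hy2, hαe]
      simp
    · -- left inverse
      intro φ
      apply Subtype.ext
      funext d
      apply Equiv.ext
      intro y
      have hcomm : ∀ y, φ.1 d ((Yf d).σ y) = (Yf d).σ (φ.1 d y) := (φ.2.1 d).2.2.1
      show e d ((e d).symm y + (e d).symm (φ.1 d (yf d))) = φ.1 d y
      conv_rhs => rw [← (e d).apply_symm_apply y,
        Stmt13.relAut_apply (he d).2 hcomm]
    · -- right inverse
      intro c
      apply Subtype.ext
      funext d
      show (e d).symm (e d ((e d).symm (yf d) + c.1 d)) = c.1 d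
      have h0 : (e d).symm (yf d) = 0 := by rw [← (he d).1, Equiv.symm_apply_apply]
      rw [Equiv.symm_apply_apply, h0, zero_add]
    · -- additivity
      intro φ ψ χ hmul d
      show (e d).symm (χ.1 d (yf d))
        = (e d).symm (φ.1 d (yf d)) + (e d).symm (ψ.1 d (yf d))
      have hcomm : ∀ y, φ.1 d ((Yf d).σ y) = (Yf d).σ (φ.1 d y) := (φ.2.1 d).2.2.1
      rw [hmul d, Equiv.Perm.mul_apply]
      have hψ : ψ.1 d (yf d) = e d ((e d).symm (ψ.1 d (yf d))) :=
        ((e d).apply_symm_apply _).symm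
      rw [hψ, Stmt13.relAut_apply (he d).2 hcomm]
      simp [add_comm]
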